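/- The Median Deterministic Mechanism has approximation ratio at most 3 for the maximum average group cost objective: for any profile r, magc(x_med, r) <= 3 * magc(y*, r), where x_med is the median of all agent locations and y* minimizes magc. -/

import Mathlib

/-!
At least half of the agents lie weakly on the far side of the median from `y*`, so by pigeonhole
some group has at least half of its members there, each at distance at least `|x_med - y*|` from
`y*`; hence `magc(y*) ≥ |x_med - y*| / 2`. Every average group cost is 1-Lipschitz in the
location, so `magc(x_med) ≤ magc(y*) + |x_med - y*| ≤ 3 magc(y*)`.
-/

open Finset

variable {n m : ℕ}

/-- Members of group `j`. -/
def grp (g : Fin n → Fin m) (j : Fin m) : Finset (Fin n) :=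
  Finset.univ.filter (fun i => g i = j)

/-- Maximum total group cost. -/
noncomputable def mtgc (x : Fin n → ℝ) (g : Fin n → Fin m) (y : ℝ) : ℝ :=
  ⨆ j : Fin m, ∑ i ∈ grp g j, |y - x i|

/-- Maximum average group cost. -/
noncomputable def magc (x : Fin n → ℝ) (g : Fin n → Fin m) (y : ℝ) : ℝ :=
  ⨆ j : Fin m, (∑ i ∈ grp g j, |y - x i|) / (grp g j).card

/-- Left median of a multiset of reals (`⌈k/2⌉`-th smallest). -/
noncomputable def medianOf (s : Multiset ℝ) : ℝ :=
  (s.sort (· ≤ ·)).getD ((Multiset.card s - 1) / 2) 0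

/-- Left median of the locations of the members of group `j`. -/
noncomputable def groupMedian (x : Fin n → ℝ) (g : Fin n → Fin m) (j : Fin m) : ℝ :=
  medianOf ((grp g j).val.map x)

/-- A largest group, ties broken by the smallest index. -/
noncomputable def majGroup (g : Fin n → Fin m) [NeZero m] : Fin m :=
  (Finset.univ.filter
    (fun j => ∀ k : Fin m, (grp g k).card ≤ (grp g j).card)).min' (by
      obtain ⟨b, -, hb⟩ :=
        Finset.exists_max_image Finset.univ (fun j => (grp g j).card) Finset.univ_nonempty
      exact ⟨b, Finset.mem_filter.mpr ⟨Finset.mem_univ _, fun k => hb k (Finset.mem_univ k)⟩⟩)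

/-- Majority Group Deterministic Mechanism. -/
noncomputable def MGDM (x : Fin n → ℝ) (g : Fin n → Fin m) [NeZero m] : ℝ :=
  groupMedian x g (majGroup g)

noncomputable def avgc (x : Fin n → ℝ) (g : Fin n → Fin m) (j : Fin m) (y : ℝ) : ℝ :=
  (∑ i ∈ grp g j, |y - x i|) / (grp g j).card

noncomputable def maxc (x : Fin n → ℝ) (g : Fin n → Fin m) (j : Fin m) (y : ℝ) : ℝ :=
  sSup ((fun i => |y - x i|) '' {i | g i = j})

noncomputable def minc (x : Fin n → ℝ) (g : Fin n → Fin m) (j : Fin m) (y : ℝ) : ℝ :=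
  sInf ((fun i => |y - x i|) '' {i | g i = j})

noncomputable def IIF1 (x : Fin n → ℝ) (g : Fin n → Fin m) (y : ℝ) : ℝ :=
  (⨆ j : Fin m, avgc x g j y) + ⨆ j : Fin m, (maxc x g j y - minc x g j y)
/-- Median of all agent locations (the `⌈n/2⌉`-th smallest). -/
noncomputable def allMedian (x : Fin n → ℝ) : ℝ :=
  medianOf (Finset.univ.val.map x)

theorem magc_fin_zero (x : Fin 0 → ℝ) (g : Fin 0 → Fin m) (y : ℝ) : magc x g y = 0 := by
  simp [magc, grp]

section GroupCost

variable (x : Fin n → ℝ) (g : Fin n → Fin m)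

theorem avgc_nonneg (j : Fin m) (y : ℝ) : 0 ≤ avgc x g j y :=
  div_nonneg (sum_nonneg fun _ _ => abs_nonneg _) (Nat.cast_nonneg _)

theorem avgc_le_magc (j : Fin m) (y : ℝ) : avgc x g j y ≤ magc x g y :=
  le_ciSup (f := fun j => avgc x g j y) (Set.finite_range _).bddAbove j

theorem magc_nonneg (y : ℝ) : 0 ≤ magc x g y :=
  Real.iSup_nonneg fun j => avgc_nonneg x g j y

theorem avgc_le_add_abs_sub (j : Fin m) (y z : ℝ) :
    avgc x g j y ≤ avgc x g j z + |y - z| := by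
  have hterm : ∀ i, |y - x i| ≤ |z - x i| + |y - z| := fun i =>
    (abs_sub_le y z (x i)).trans_eq (by rw [add_comm, abs_sub_comm y z])
  have hshift : (#(grp g j) * |y - z|) / #(grp g j) ≤ |y - z| := by
    rcases (#(grp g j)).eq_zero_or_pos with h | h
    · simp [h]
    · rw [mul_div_cancel_left₀ _ (by positivity)]
  calc avgc x g j y ≤ (∑ i ∈ grp g j, (|z - x i| + |y - z|)) / #(grp g j) := by
        unfold avgc; gcongr with i; exact hterm i
    _ = avgc x g j z + (#(grp g j) * |y - z|) / #(grp g j) := by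
        rw [sum_add_distrib, sum_const, nsmul_eq_mul, add_div]; rfl
    _ ≤ avgc x g j z + |y - z| := by gcongr

theorem magc_le_add_abs_sub (y z : ℝ) : magc x g y ≤ magc x g z + |y - z| :=
  Real.iSup_le (fun j => (avgc_le_add_abs_sub x g j y z).trans (by gcongr; exact avgc_le_magc x g j z))
    (add_nonneg (magc_nonneg x g z) (abs_nonneg _))

theorem exists_card_grp_le_two_mul_card_filter (hn : 0 < n) {L : Finset (Fin n)}
    (hL : n ≤ 2 * #L) : ∃ j, (grp g j).Nonempty ∧ #(grp g j) ≤ 2 * #{i ∈ L | g i = j} := by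
  classical
  have hgroups : ∑ j ∈ univ.image g, #(grp g j) = n := by
    simpa [grp] using (card_eq_sum_card_image g univ).symm
  have hL_groups : ∑ j ∈ univ.image g, #{i ∈ L | g i = j} = #L :=
    (card_eq_sum_card_fiberwise fun i _ => mem_image_of_mem g (mem_univ i)).symm
  obtain ⟨j, hj, hle⟩ := exists_le_of_sum_le (f := fun j => #(grp g j))
    (g := fun j => 2 * #{i ∈ L | g i = j}) (univ_nonempty_iff.mpr ⟨⟨0, hn⟩⟩ |>.image g)
    (by rw [hgroups, ← mul_sum, hL_groups]; exact hL)
  obtain ⟨i, -, rfl⟩ := mem_image.mp hj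
  exact ⟨g i, ⟨i, by simp [grp]⟩, hle⟩

theorem le_two_mul_avgc {L : Finset (Fin n)} {j : Fin m} (hj : (grp g j).Nonempty)
    (hcard : #(grp g j) ≤ 2 * #{i ∈ L | g i = j}) {y c : ℝ} (hc : 0 ≤ c)
    (hfar : ∀ i ∈ L, c ≤ |y - x i|) : c ≤ 2 * avgc x g j y := by
  have hpos : (0 : ℝ) < #(grp g j) := by exact_mod_cast hj.card_pos
  have hsub : {i ∈ L | g i = j} ⊆ grp g j := fun i hi => by
    simp only [grp, mem_filter, mem_univ, true_and] at hi ⊢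
    exact hi.2
  have hsum : #{i ∈ L | g i = j} * c ≤ ∑ i ∈ grp g j, |y - x i| :=
    calc #{i ∈ L | g i = j} * c = ∑ _i ∈ {i ∈ L | g i = j}, c := by
          rw [sum_const, nsmul_eq_mul]
      _ ≤ ∑ i ∈ {i ∈ L | g i = j}, |y - x i| :=
          sum_le_sum fun i hi => hfar i (mem_filter.mp hi).1
      _ ≤ ∑ i ∈ grp g j, |y - x i| :=
          sum_le_sum_of_subset_of_nonneg hsub fun _ _ _ => abs_nonneg _
  rw [avgc, mul_div_assoc', le_div_iff₀ hpos]
  calc c * #(grp g j) ≤ c * (2 * #{i ∈ L | g i = j}) := by gcongr; exact_mod_cast hcard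
    _ ≤ 2 * ∑ i ∈ grp g j, |y - x i| := by linarith

theorem abs_sub_le_two_mul_magc (hn : 0 < n) {L : Finset (Fin n)} (hL : n ≤ 2 * #L)
    {y z : ℝ} (hbetween : ∀ i ∈ L, z ∈ Set.uIcc y (x i)) : |z - y| ≤ 2 * magc x g y := by
  obtain ⟨j, hj, hcard⟩ := exists_card_grp_le_two_mul_card_filter g hn hL
  have hfar : ∀ i ∈ L, |z - y| ≤ |y - x i| := fun i hi =>
    (Set.abs_sub_left_of_mem_uIcc (hbetween i hi)).trans_eq (abs_sub_comm _ _)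
  calc |z - y| ≤ 2 * avgc x g j y := le_two_mul_avgc x g hj hcard (abs_nonneg _) hfar
    _ ≤ 2 * magc x g y := by gcongr; exact avgc_le_magc x g j y

end GroupCost

section Median

theorem List.Pairwise.succ_le_countP_le_getElem {α : Type*} [LinearOrder α] {l : List α}
    (hl : l.Pairwise (· ≤ ·)) {k : ℕ} (hk : k < l.length) :
    k + 1 ≤ l.countP (· ≤ l[k]) := by
  have htake : (l.take (k + 1)).countP (· ≤ l[k]) = k + 1 := by
    rw [List.countP_eq_length.mpr, List.length_take]
    · omega
    intro a ha
    obtain ⟨i, hi, rfl⟩ := List.mem_take_iff_getElem.mp ha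
    simpa using hl.rel_get_of_le (a := ⟨i, by omega⟩) (b := ⟨k, hk⟩) (by simp; omega)
  exact htake ▸ (List.take_sublist _ _).countP_le

theorem List.Pairwise.length_sub_le_countP_getElem_le {α : Type*} [LinearOrder α] {l : List α}
    (hl : l.Pairwise (· ≤ ·)) {k : ℕ} (hk : k < l.length) :
    l.length - k ≤ l.countP (l[k] ≤ ·) := by
  have hdrop : (l.drop k).countP (l[k] ≤ ·) = l.length - k := by
    rw [List.countP_eq_length.mpr, List.length_drop]
    intro a ha
    obtain ⟨i, hi, rfl⟩ := List.mem_iff_getElem.mp ha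
    rw [List.length_drop] at hi
    simpa using hl.rel_get_of_le (a := ⟨k, hk⟩) (b := ⟨k + i, by omega⟩) (by simp)
  exact hdrop ▸ (List.drop_sublist _ _).countP_le

theorem medianIndex_lt_length_sort {s : Multiset ℝ} (hs : s ≠ 0) :
    (Multiset.card s - 1) / 2 < (s.sort (· ≤ ·)).length := by
  rw [Multiset.length_sort]
  have := Multiset.card_pos.mpr hs
  omega

theorem medianOf_eq_getElem {s : Multiset ℝ} (hs : s ≠ 0) :
    medianOf s = (s.sort (· ≤ ·))[(Multiset.card s - 1) / 2]'(medianIndex_lt_length_sort hs) :=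
  List.getD_eq_getElem _ _ _

theorem card_le_two_mul_countP_le_medianOf {s : Multiset ℝ} (hs : s ≠ 0) :
    Multiset.card s ≤ 2 * s.countP (· ≤ medianOf s) := by
  have h := (Multiset.pairwise_sort s (· ≤ ·)).succ_le_countP_le_getElem
    (k := (Multiset.card s - 1) / 2) (medianIndex_lt_length_sort hs)
  rw [← medianOf_eq_getElem hs] at h
  generalize medianOf s = M at h ⊢
  rw [← Multiset.sort_eq s (· ≤ ·), Multiset.coe_countP, Multiset.coe_card, Multiset.length_sort]
  omega

theorem card_le_two_mul_countP_medianOf_le {s : Multiset ℝ} (hs : s ≠ 0) :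
    Multiset.card s ≤ 2 * s.countP (medianOf s ≤ ·) := by
  have h := (Multiset.pairwise_sort s (· ≤ ·)).length_sub_le_countP_getElem_le
    (k := (Multiset.card s - 1) / 2) (medianIndex_lt_length_sort hs)
  rw [← medianOf_eq_getElem hs] at h
  generalize medianOf s = M at h ⊢
  rw [Multiset.length_sort] at h
  rw [← Multiset.sort_eq s (· ≤ ·), Multiset.coe_countP, Multiset.coe_card, Multiset.length_sort]
  have := Multiset.card_pos.mpr hs
  omega

theorem map_univ_val_ne_zero (x : Fin n → ℝ) (hn : 0 < n) : univ.val.map x ≠ 0 :=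
  Multiset.card_pos.mp (by simpa using hn)

theorem card_le_two_mul_card_le_allMedian (x : Fin n → ℝ) (hn : 0 < n) :
    n ≤ 2 * #{i | x i ≤ allMedian x} := by
  have h := card_le_two_mul_countP_le_medianOf (map_univ_val_ne_zero x hn)
  rwa [Multiset.card_map, Multiset.countP_map, card_val, card_univ, Fintype.card_fin] at h

theorem card_le_two_mul_card_allMedian_le (x : Fin n → ℝ) (hn : 0 < n) :
    n ≤ 2 * #{i | allMedian x ≤ x i} := by
  have h := card_le_two_mul_countP_medianOf_le (map_univ_val_ne_zero x hn)
  rwa [Multiset.card_map, Multiset.countP_map, card_val, card_univ, Fintype.card_fin] at h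

end Median

theorem stmt9_general (x : Fin n → ℝ) (g : Fin n → Fin m) (ystar : ℝ) :
    magc x g (allMedian x) ≤ 3 * magc x g ystar := by
  obtain rfl | hn := n.eq_zero_or_pos
  · simp [magc_fin_zero]
  have hdist : |allMedian x - ystar| ≤ 2 * magc x g ystar := by
    rcases le_total (allMedian x) ystar with h | h
    · exact abs_sub_le_two_mul_magc x g hn (card_le_two_mul_card_le_allMedian x hn)
        fun i hi => Set.mem_uIcc_of_ge (mem_filter.mp hi).2 h
    · exact abs_sub_le_two_mul_magc x g hn (card_le_two_mul_card_allMedian_le x hn)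
        fun i hi => Set.mem_uIcc_of_le h (mem_filter.mp hi).2
  calc magc x g (allMedian x) ≤ magc x g ystar + |allMedian x - ystar| :=
        magc_le_add_abs_sub x g _ _
    _ ≤ 3 * magc x g ystar := by linarith

/-- The Median Deterministic Mechanism has approximation ratio at most 3 for
the maximum average group cost. -/
theorem stmt9 [NeZero m] (x : Fin n → ℝ) (g : Fin n → Fin m)
    (hg : Function.Surjective g) (ystar : ℝ)
    (hopt : ∀ z : ℝ, magc x g ystar ≤ magc x g z) :
    magc x g (allMedian x) ≤ 3 * magc x g ystar :=
  stmt9_general x g ystar
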